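/- If n is odd and the pole ζ is a nonzero real number, then −ζ is a zero of the polar Legendre polynomial P_n, i.e., P_n(−ζ) = 0. -/

import Mathlib

/-!
`Q := (X - ζ) P_n` satisfies `Q' = (n + 1) L_n`. For odd `n` the Legendre polynomial
`L_n` is odd (by uniqueness of the monic orthogonal polynomial of degree `n` on the symmetric
interval `[-1, 1]`), so `Q` is even. Hence `Q(-ζ) = Q(ζ) = 0`, and since `-ζ - ζ ≠ 0`,
`P_n(-ζ) = 0`.
-/

open Polynomial

/-- `L` is the sequence of monic Legendre polynomials: `L n` is monic of degree `n` and
orthogonal on `[-1,1]` to `x^k` for all `k < n`. -/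
def IsMonicLegendre (L : ℕ → Polynomial ℝ) : Prop :=
  ∀ n : ℕ, (L n).Monic ∧ (L n).natDegree = n ∧
    ∀ k : ℕ, k < n → (∫ x in (-1:ℝ)..1, (L n).eval x * x ^ k) = 0

/-- `P` is the sequence of polar Legendre polynomials with pole `ζ` associated to `L`:
`P n` is monic of degree `n` and `(n+1)·L_n(z) = P_n(z) + (z-ζ)·P_n′(z)` for all `z ∈ ℂ`. -/
def IsPolarLegendre (L : ℕ → Polynomial ℝ) (ζ : ℂ) (P : ℕ → Polynomial ℂ) : Prop :=
  ∀ n : ℕ, (P n).Monic ∧ (P n).natDegree = n ∧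
    ∀ z : ℂ, ((n : ℂ) + 1) * ((L n).map (algebraMap ℝ ℂ)).eval z =
      (P n).eval z + (z - ζ) * ((P n).derivative.eval z)

open MeasureTheory

namespace Polynomial

theorem IsMonicOfDegree.neg_one_pow_mul_comp_neg_X {R : Type*} [CommRing R] [IsDomain R]
    {p : R[X]} {n : ℕ} (hp : IsMonicOfDegree p n) :
    IsMonicOfDegree ((-1) ^ n * p.comp (-X)) n := by
  have hmonic := hp.monic.neg_one_pow_natDegree_mul_comp_neg_X
  rw [hp.natDegree_eq] at hmonic
  refine ⟨?_, hmonic⟩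
  rw [← C_1, ← C_neg, ← C_pow, natDegree_C_mul (by simp), natDegree_comp]
  simp [hp.natDegree_eq]

theorem comp_neg_X_eq_self_of_derivative_comp_neg_X {R : Type*} [CommRing R]
    [IsAddTorsionFree R] {p : R[X]} (hp : (derivative p).comp (-X) = -derivative p) :
    p.comp (-X) = p := by
  have hderiv : derivative (p.comp (-X) - p) = 0 := by
    rw [derivative_sub, derivative_comp, hp]
    simp
  have hconst := eq_C_of_derivative_eq_zero hderiv
  rw [coeff_zero_eq_eval_zero] at hconst
  simpa [eval_comp, sub_eq_zero] using hconst

theorem intervalIntegrable_eval_mul_pow (p : ℝ[X]) (k : ℕ) (a b : ℝ) :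
    IntervalIntegrable (fun x => p.eval x * x ^ k) volume a b :=
  (p.continuous.mul (continuous_pow k)).intervalIntegrable _ _

end Polynomial

def IsOrthogonalBelow (a b : ℝ) (n : ℕ) (p : ℝ[X]) : Prop :=
  ∀ k < n, ∫ x in a..b, p.eval x * x ^ k = 0

namespace IsOrthogonalBelow

variable {a b : ℝ} {n : ℕ} {p q : ℝ[X]}

theorem sub (hp : IsOrthogonalBelow a b n p) (hq : IsOrthogonalBelow a b n q) :
    IsOrthogonalBelow a b n (p - q) := by
  intro k hk
  simp only [eval_sub, sub_mul]
  rw [intervalIntegral.integral_sub (intervalIntegrable_eval_mul_pow p k a b)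
    (intervalIntegrable_eval_mul_pow q k a b), hp k hk, hq k hk, sub_zero]

theorem neg_one_pow_mul (hp : IsOrthogonalBelow a b n p) (m : ℕ) :
    IsOrthogonalBelow a b n ((-1) ^ m * p) := by
  intro k hk
  simp only [eval_mul, eval_pow, eval_neg, eval_one, mul_assoc]
  rw [intervalIntegral.integral_const_mul, hp k hk, mul_zero]

theorem comp_neg_X (hp : IsOrthogonalBelow (-a) a n p) :
    IsOrthogonalBelow (-a) a n (p.comp (-X)) := by
  intro k hk
  calc ∫ x in -a..a, (p.comp (-X)).eval x * x ^ k
      = ∫ x in -a..a, (-1) ^ k * (p.eval (-x) * (-x) ^ k) := by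
        congr 1 with x
        have hsign : ((-1 : ℝ) ^ k) * (-1) ^ k = 1 := by rw [← mul_pow]; norm_num
        rw [eval_comp, eval_neg, eval_X, neg_pow x k]
        linear_combination -(p.eval (-x) * x ^ k) * hsign
    _ = (-1) ^ k * ∫ x in -a..a, p.eval x * x ^ k := by
        rw [intervalIntegral.integral_const_mul,
          intervalIntegral.integral_comp_neg (fun x => p.eval x * x ^ k), neg_neg]
    _ = 0 := by rw [hp k hk, mul_zero]

theorem integral_eval_mul_self_eq_zero (hp : IsOrthogonalBelow a b n p)
    (hdeg : p.natDegree < n) : ∫ x in a..b, p.eval x * p.eval x = 0 := by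
  have hexpand : ∀ x, p.eval x * p.eval x
      = ∑ k ∈ Finset.range n, p.coeff k * (p.eval x * x ^ k) := fun x => by
    nth_rewrite 2 [eval_eq_sum_range' hdeg x]
    rw [Finset.mul_sum]
    exact Finset.sum_congr rfl fun k _ => by ring
  simp only [hexpand]
  rw [intervalIntegral.integral_finsetSum
    fun k _ => (intervalIntegrable_eval_mul_pow p k a b).const_mul _]
  refine Finset.sum_eq_zero fun k hk => ?_
  rw [intervalIntegral.integral_const_mul, hp k (Finset.mem_range.mp hk), mul_zero]

theorem eq_zero_of_natDegree_lt (hab : a < b) (hp : IsOrthogonalBelow a b n p)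
    (hdeg : p.natDegree < n) : p = 0 := by
  by_contra hne
  have hsq := hp.integral_eval_mul_self_eq_zero hdeg
  obtain ⟨c, hc, hpc⟩ : ∃ c ∈ Set.Icc a b, p.eval c ≠ 0 := by
    by_contra! hroots
    exact hne <| eq_zero_of_infinite_isRoot p <| (Set.Icc_infinite hab).mono hroots
  have hpos := intervalIntegral.integral_lt_integral_of_continuousOn_of_le_of_exists_lt hab
    continuousOn_const (p.continuous.mul p.continuous).continuousOn
    (fun x _ => mul_self_nonneg (p.eval x)) ⟨c, hc, mul_self_pos.mpr hpc⟩
  simp [hsq] at hpos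

theorem eq_of_isMonicOfDegree (hab : a < b) (hpo : IsOrthogonalBelow a b n p)
    (hqo : IsOrthogonalBelow a b n q) (hp : IsMonicOfDegree p n) (hq : IsMonicOfDegree q n) :
    p = q := by
  rcases eq_or_ne n 0 with rfl | hn
  · rw [isMonicOfDegree_zero_iff.mp hp, isMonicOfDegree_zero_iff.mp hq]
  exact sub_eq_zero.mp <| (hpo.sub hqo).eq_zero_of_natDegree_lt hab (hp.natDegree_sub_lt hn hq)

end IsOrthogonalBelow

theorem IsMonicLegendre.comp_neg_X {L : ℕ → ℝ[X]} (hL : IsMonicLegendre L) (n : ℕ) :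
    (L n).comp (-X) = (-1) ^ n * L n := by
  obtain ⟨hmonic, hdeg, (horth : IsOrthogonalBelow (-1) 1 n (L n))⟩ := hL n
  have hL_n : IsMonicOfDegree (L n) n := ⟨hdeg, hmonic⟩
  have hreflect : (-1) ^ n * (L n).comp (-X) = L n :=
    (horth.comp_neg_X.neg_one_pow_mul n).eq_of_isMonicOfDegree (by norm_num) horth
      hL_n.neg_one_pow_mul_comp_neg_X hL_n
  nth_rewrite 2 [← hreflect]
  rw [← mul_assoc, ← mul_pow]
  simp

theorem IsPolarLegendre.derivative_X_sub_C_mul {L : ℕ → ℝ[X]} {ζ : ℂ} {P : ℕ → ℂ[X]}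
    (hP : IsPolarLegendre L ζ P) (n : ℕ) :
    derivative ((X - C ζ) * P n) = C ((n : ℂ) + 1) * (L n).map (algebraMap ℝ ℂ) := by
  refine Polynomial.funext fun z => ?_
  simp only [derivative_mul, derivative_sub, derivative_X, derivative_C, sub_zero, one_mul,
    eval_add, eval_mul, eval_sub, eval_X, eval_C]
  exact ((hP n).2.2 z).symm

theorem polar_legendre_odd_root_neg_pole_general
    (L : ℕ → Polynomial ℝ) (ζ : ℂ) (P : ℕ → Polynomial ℂ)
    (hL : IsMonicLegendre L) (hP : IsPolarLegendre L ζ P)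
    (n : ℕ) (hn : Odd n) (hζne : ζ ≠ 0) :
    (P n).eval (-ζ) = 0 := by
  set Q := (X - C ζ) * P n
  have hL_odd : ((L n).map (algebraMap ℝ ℂ)).comp (-X) = -(L n).map (algebraMap ℝ ℂ) := by
    simpa [map_comp, hn.neg_one_pow] using congrArg (map (algebraMap ℝ ℂ)) (hL.comp_neg_X n)
  have hQ_even : Q.comp (-X) = Q :=
    comp_neg_X_eq_self_of_derivative_comp_neg_X <| by
      rw [hP.derivative_X_sub_C_mul, mul_comp, C_comp, hL_odd, mul_neg]
  have hQ : Q.eval (-ζ) = 0 := by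
    rw [← hQ_even, eval_comp]
    simp [Q]
  have hζ : -ζ - ζ ≠ 0 := by
    rw [← neg_add', neg_ne_zero, ← two_mul]
    exact mul_ne_zero two_ne_zero hζne
  simpa [Q, hζ] using hQ

/-- If `n` is odd and the pole `ζ` is a nonzero real number, then `P_n(−ζ) = 0`. -/
theorem polar_legendre_odd_root_neg_pole
    (L : ℕ → Polynomial ℝ) (ζ : ℂ) (P : ℕ → Polynomial ℂ)
    (hL : IsMonicLegendre L) (hP : IsPolarLegendre L ζ P)
    (n : ℕ) (hn : Odd n) (hζreal : ζ.im = 0) (hζne : ζ ≠ 0) :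
    (P n).eval (-ζ) = 0 :=
  polar_legendre_odd_root_neg_pole_general L ζ P hL hP n hn hζne
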